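/- Under the assumptions of the previous statement (entries of D^{(n)} bounded by θ and empirical measures of the D^{(n)}(u) converging weakly to P), for every h ≥ 2 the number |G(D^{(n)}, h)| of directed colored multigraphs on [n] with degree sequence D^{(n)} whose colorblind multigraph has no cycle of length ≤ h satisfies |G(D^{(n)}, h)| ~ α_h · ( ∏_{c∈C_<} S_c^{(n)}! · ∏_{c∈C_=} (S_c^{(n)} − 1)!! ) / ( ∏_{c∈C} ∏_{u=1}^n D_c^{(n)}(u)! ) as n → ∞, where S_c^{(n)} = ∑_{u=1}^n D_c^{(n)}(u) and α_h > 0 is the limit probability that the configuration model produces no cycle of length ≤ h. -/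

import Mathlib

open Finset

/-! Generalized configuration model with colors `C = Fin L × Fin L`, conjugate
`c̄ = c.swap`, diagonal colors `C_=` (with `c.1 = c.2`) and colors `C_<`
(with `c.1 < c.2`). -/

/-- Half-edges of color `c`: `W_c = {(i,j) : i ∈ [n], 1 ≤ j ≤ D_c(i)}`. -/
abbrev CW (L n : ℕ) (D : Fin n → Fin L × Fin L → ℕ) (c : Fin L × Fin L) : Type :=
  Σ i : Fin n, Fin (D i c)

/-- Underlying data of a configuration: for each diagonal color a permutation of `W_c`,
and for each color `c ∈ C_<` a bijection `W_c ≃ W_{c̄}`. -/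
abbrev ConfigCarrier (L n : ℕ) (D : Fin n → Fin L × Fin L → ℕ) : Type :=
  (∀ k : Fin L, Equiv.Perm (CW L n D (k, k))) ×
    (∀ c : Fin L × Fin L, c.1 < c.2 → (CW L n D c ≃ CW L n D c.swap))

/-- A configuration: the diagonal components are perfect matchings
(fixed-point-free involutions). -/
abbrev Config (L n : ℕ) (D : Fin n → Fin L × Fin L → ℕ) : Type :=
  {σ : ConfigCarrier L n D // ∀ (k : Fin L) (x : CW L n D (k, k)),
      σ.1 k (σ.1 k x) = x ∧ σ.1 k x ≠ x}

/-- The directed colored multigraph `Γ(σ)` produced by a configuration `σ`: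
`Γ(σ)_c(i,j)` counts half-edges of color `c` at `i` matched to half-edges at `j`. -/
noncomputable def Gamma (L n : ℕ) (D : Fin n → Fin L × Fin L → ℕ) (σ : Config L n D)
    (c : Fin L × Fin L) (i j : Fin n) : ℕ :=
  if heq : c.1 = c.2 then
    Nat.card {x : CW L n D (c.1, c.1) // x.1 = i ∧ (σ.1.1 c.1 x).1 = j}
  else if hlt : c.1 < c.2 then
    Nat.card {x : CW L n D c // x.1 = i ∧ (σ.1.2 c hlt x).1 = j}
  else
    Nat.card {x : CW L n D c.swap // x.1 = j ∧
      (σ.1.2 c.swap (lt_of_le_of_ne (not_lt.mp hlt) (Ne.symm heq)) x).1 = i}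

/-- Colorblind multigraph: `ω̄(u,v) = ∑_c ω_c(u,v)`. -/
def colorBlind (L n : ℕ) (w : Fin L × Fin L → Fin n → Fin n → ℕ) (u v : Fin n) : ℕ :=
  ∑ c : Fin L × Fin L, w c u v

/-- The (colorblind) multigraph `w` has a cycle of length `ℓ`: a loop for `ℓ = 1`,
a multiple edge for `ℓ = 2`, and `ℓ` distinct consecutively joined vertices for `ℓ ≥ 3`. -/
def HasCycleLen (n : ℕ) (w : Fin n → Fin n → ℕ) (ℓ : ℕ) : Prop :=
  if ℓ = 1 then ∃ v : Fin n, 2 ≤ w v v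
  else if ℓ = 2 then ∃ u v : Fin n, u ≠ v ∧ 2 ≤ w u v
  else 3 ≤ ℓ ∧ ∃ f : Fin ℓ → Fin n, Function.Injective f ∧
    ∀ i : Fin ℓ, 1 ≤ w (f i) (f ⟨(i.1 + 1) % ℓ, Nat.mod_lt _ i.pos⟩)

/-- No cycle of length `≤ h`. -/
def NoShortCycle (n : ℕ) (w : Fin n → Fin n → ℕ) (h : ℕ) : Prop :=
  ∀ ℓ : ℕ, 1 ≤ ℓ → ℓ ≤ h → ¬ HasCycleLen n w ℓ

/-- `H` is a directed colored multigraph on `[n]` with degree sequence `D`. -/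
def IsMultigraph (L n : ℕ) (D : Fin n → Fin L × Fin L → ℕ)
    (H : Fin L × Fin L → Fin n → Fin n → ℕ) : Prop :=
  (∀ (k : Fin L) (i j : Fin n), H (k, k) i j = H (k, k) j i) ∧
  (∀ (k : Fin L) (i : Fin n), Even (H (k, k) i i)) ∧
  (∀ c : Fin L × Fin L, c.1 ≠ c.2 → ∀ i j : Fin n, H c i j = H c.swap j i) ∧
  (∀ (i : Fin n) (c : Fin L × Fin L), D i c = ∑ j, H c i j)

/-! The map `σ ↦ Γ(σ)` sends the configurations without short cycles onto `G(D, h)`. Since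
`h ≥ 2`, every multigraph in `G(D, h)` is simple, and a configuration realises a simple `H`
exactly when, at each vertex `u` and color `c`, it matches the `D_c(u)` half-edges bijectively
with the `c`-neighbours of `u`; so every fibre has `∏_c ∏_u D_c(u)!` elements. Hence
`|G(D, h)| · ∏_c ∏_u D_c(u)!` counts the configurations without short cycles, while all
configurations number `∏_{c ∈ C_<} S_c! · ∏_{c ∈ C_=} (S_c - 1)!!`, and the quotient is the
probability whose limit is `α`. -/

section Counting

open scoped Nat

variable {X Y V W : Type*}

lemma even_card_of_involutive [Fintype X] [DecidableEq X] {g : X → X}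
    (hg : Function.Involutive g) (hfix : ∀ x, g x ≠ x) : Even (Fintype.card X) := by
  have hsq : hg.toPerm ^ 2 ^ 1 = 1 := Equiv.ext hg
  have hsupp : (hg.toPerm).support = univ := by
    ext x; simpa using hfix x
  have := (Equiv.Perm.card_compl_support_modEq hsq).symm
  rw [hsupp, compl_univ, card_empty] at this
  exact Nat.even_iff.mpr this

def fiberwiseEquivEquivPi (p : X → V) (q : Y → V) :
    {e : X ≃ Y // ∀ x, q (e x) = p x} ≃ ∀ v, ({x // p x = v} ≃ {y // q y = v}) where
  toFun e v := e.1.subtypeEquiv fun x => by rw [e.2 x]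
  invFun F := ⟨Equiv.ofFiberEquiv F, Equiv.ofFiberEquiv_map F⟩
  left_inv e := by ext x; simp [Equiv.ofFiberEquiv]
  right_inv F := by funext v; ext ⟨x, rfl⟩; rfl

lemma card_equiv_of_card_eq [Finite X] [Finite Y] (h : Nat.card X = Nat.card Y) :
    Nat.card (X ≃ Y) = (Nat.card X)! := by
  classical
  have := Fintype.ofFinite X
  have := Fintype.ofFinite Y
  simp only [Nat.card_eq_fintype_card] at h ⊢
  exact Fintype.card_equiv (Fintype.equivOfCardEq h)

theorem card_fiberwise_equiv [Fintype V] [Finite X] [Finite Y] (p : X → V) (q : Y → V)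
    (h : ∀ v, Nat.card {x // p x = v} = Nat.card {y // q y = v}) :
    Nat.card {e : X ≃ Y // ∀ x, q (e x) = p x} = ∏ v, (Nat.card {x // p x = v})! := by
  rw [Nat.card_congr (fiberwiseEquivEquivPi p q), Nat.card_pi]
  exact prod_congr rfl fun v _ => card_equiv_of_card_eq (h v)

lemma card_subtype_eq_one [Fintype V] (f : V → ℕ) (hf : ∀ v, f v ≤ 1) :
    Nat.card {v // f v = 1} = ∑ v, f v := by
  classical
  rw [Nat.card_eq_fintype_card, Fintype.card_subtype, card_filter]
  refine sum_congr rfl fun v _ => ?_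
  rcases Nat.le_one_iff_eq_zero_or_eq_one.mp (hf v) with h | h <;> simp [h]

lemma card_eq_mul_of_card_fiber [Finite X] (f : X → Y) {k : ℕ} (hk : 0 < k)
    (h : ∀ y, Nat.card {x // f x = y} = k) : Nat.card X = Nat.card Y * k := by
  have hsurj : Function.Surjective f := fun y => by
    obtain ⟨⟨x, hx⟩⟩ := (Nat.card_pos_iff.mp ((h y).symm ▸ hk)).1
    exact ⟨x, hx⟩
  have := Finite.of_surjective f hsurj
  have := Fintype.ofFinite Y
  rw [← Nat.card_congr (Equiv.sigmaFiberEquiv f), Nat.card_sigma, sum_congr rfl fun y _ => h y,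
    sum_const, card_univ, smul_eq_mul, Nat.card_eq_fintype_card]

lemma card_prop_arrow (p : Prop) [Decidable p] (X : Type*) :
    Nat.card (p → X) = if p then Nat.card X else 1 := by
  by_cases hp : p
  · simp [hp, Nat.card_congr (Equiv.trueArrowEquiv X)]
  · simp [hp]

lemma sum_card_subtype_and_eq [Finite X] [Fintype V] (P : X → Prop) (r : X → V) :
    ∑ j, Nat.card {x // P x ∧ r x = j} = Nat.card {x // P x} := by
  rw [← Nat.card_sigma]
  exact Nat.card_congr <| (Equiv.sigmaCongrRight fun j =>
    (Equiv.subtypeSubtypeEquivSubtypeInter P (r · = j)).symm).trans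
      (Equiv.sigmaFiberEquiv fun x : {x // P x} => r x)

lemma sum_card_subtype_eq_and [Finite X] [Fintype V] (P : X → Prop) (r : X → V) :
    ∑ j, Nat.card {x // r x = j ∧ P x} = Nat.card {x // P x} := by
  simp_rw [and_comm (a := r _ = _)]
  exact sum_card_subtype_and_eq P r

lemma card_fiber_prodMk (p r : X → V) (i j : V) :
    Nat.card {x // (p x, r x) = (i, j)} = Nat.card {x // p x = i ∧ r x = j} :=
  Nat.card_congr (Equiv.subtypeEquivRight fun _ => Prod.mk_inj)

variable (f : X → W) (g : W → ℕ)

lemma map_mem_of_card_fiber [Finite X] (hg : ∀ w, g w ≤ 1)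
    (h : ∀ w, Nat.card {x // f x = w} = g w) (x : X) : g (f x) = 1 := by
  have : 0 < Nat.card {x' // f x' = f x} := Nat.card_pos_iff.mpr ⟨⟨⟨x, rfl⟩⟩, inferInstance⟩
  rw [h] at this
  have := hg (f x)
  omega

noncomputable def equivOfCardFiber [Finite X] (hg : ∀ w, g w ≤ 1)
    (h : ∀ w, Nat.card {x // f x = w} = g w) : X ≃ {w // g w = 1} :=
  Equiv.ofBijective (fun x => ⟨f x, map_mem_of_card_fiber f g hg h x⟩) <| by
    refine ⟨fun x x' hxx' => ?_, fun w => ?_⟩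
    · have hsub : Subsingleton {x'' // f x'' = f x} :=
        Finite.card_le_one_iff_subsingleton.mp (h _ ▸ hg _)
      exact congrArg Subtype.val
        (Subsingleton.elim (⟨x, rfl⟩ : {x'' // f x'' = f x}) ⟨x', (congrArg Subtype.val hxx').symm⟩)
    · obtain ⟨⟨x, hx⟩⟩ := (Nat.card_pos_iff.mp (by rw [h, w.2]; exact one_pos)).1
      exact ⟨x, Subtype.ext hx⟩

@[simp]
lemma coe_equivOfCardFiber_apply [Finite X] (hg : ∀ w, g w ≤ 1)
    (h : ∀ w, Nat.card {x // f x = w} = g w) (x : X) :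
    (equivOfCardFiber f g hg h x : W) = f x := rfl

lemma equivOfCardFiber_eq [Finite X] (hg : ∀ w, g w ≤ 1)
    (h : ∀ w, Nat.card {x // f x = w} = g w) (α : X ≃ {w // g w = 1})
    (hα : ∀ x, (α x : W) = f x) : equivOfCardFiber f g hg h = α :=
  Equiv.ext fun x => Subtype.ext (hα x).symm

lemma card_fiber_of_equiv (hg : ∀ w, g w ≤ 1) (α : X ≃ {w // g w = 1})
    (hα : ∀ x, (α x : W) = f x) (w : W) : Nat.card {x // f x = w} = g w := by
  rw [Nat.card_congr (α.subtypeEquiv (p := fun x => f x = w) (q := fun e => e.1 = w)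
    fun x => by rw [hα])]
  rcases Nat.le_one_iff_eq_zero_or_eq_one.mp (hg w) with h0 | h1
  · rw [h0, Nat.card_eq_zero]
    exact Or.inl ⟨fun e => by have := e.1.2; rw [e.2, h0] at this; omega⟩
  · rw [h1, Nat.card_eq_one_iff_unique]
    exact ⟨⟨fun e e' => Subtype.ext (Subtype.ext (e.2.trans e'.2.symm))⟩, ⟨⟨⟨w, h1⟩, rfl⟩⟩⟩

end Counting

abbrev PerfectMatching (α : Type*) : Type _ := {f : Equiv.Perm α // ∀ x, f (f x) = x ∧ f x ≠ x}

section MatchingCount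

open scoped Nat

variable {α : Type*} [DecidableEq α]

lemma card_subtype_ne [Fintype α] (a : α) : Fintype.card {x // x ≠ a} = Fintype.card α - 1 := by
  rw [Fintype.card_subtype_compl, Fintype.card_subtype_eq]

lemma card_subtype_ne_and_ne [Fintype α] {a b : α} (hb : b ≠ a) :
    Fintype.card {x // x ≠ a ∧ x ≠ b} = Fintype.card α - 2 := by
  rw [← Fintype.card_congr (Equiv.subtypeSubtypeEquivSubtypeInter (· ≠ a) (· ≠ b))]
  have := card_subtype_ne (⟨b, hb⟩ : {x // x ≠ a})
  simp only [ne_eq, Subtype.ext_iff] at this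
  rw [this, card_subtype_ne]
  omega

def extendPerm (a b : α) (g : Equiv.Perm {x // x ≠ a ∧ x ≠ b}) : Equiv.Perm α :=
  Equiv.swap a b * Equiv.Perm.ofSubtype g

variable {a b : α}

lemma extendPerm_apply_left (g : Equiv.Perm {x // x ≠ a ∧ x ≠ b}) : extendPerm a b g a = b := by
  simp [extendPerm, Equiv.Perm.ofSubtype_apply_of_not_mem g (p := fun x => x ≠ a ∧ x ≠ b)]

lemma extendPerm_apply_right (g : Equiv.Perm {x // x ≠ a ∧ x ≠ b}) : extendPerm a b g b = a := by
  simp [extendPerm, Equiv.Perm.ofSubtype_apply_of_not_mem g (p := fun x => x ≠ a ∧ x ≠ b)]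

lemma extendPerm_apply_of_ne (g : Equiv.Perm {x // x ≠ a ∧ x ≠ b}) {x : α}
    (hx : x ≠ a ∧ x ≠ b) : extendPerm a b g x = g ⟨x, hx⟩ := by
  have := (g ⟨x, hx⟩).2
  simp [extendPerm, Equiv.Perm.ofSubtype_apply_of_mem g hx,
    Equiv.swap_apply_of_ne_of_ne this.1 this.2]

def extendMatching (hb : b ≠ a) (g : PerfectMatching {x // x ≠ a ∧ x ≠ b}) :
    PerfectMatching α :=
  ⟨extendPerm a b g.1, fun x => by
    by_cases hxa : x = a
    · subst hxa; simp [extendPerm_apply_left, extendPerm_apply_right, hb]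
    by_cases hxb : x = b
    · subst hxb; simp [extendPerm_apply_left, extendPerm_apply_right, hb.symm]
    have hgx := (g.1 ⟨x, hxa, hxb⟩).2
    rw [extendPerm_apply_of_ne _ ⟨hxa, hxb⟩, extendPerm_apply_of_ne _ hgx]
    exact ⟨congrArg Subtype.val (g.2 _).1, fun h => (g.2 _).2 (Subtype.ext h)⟩⟩

lemma extendMatching_bijective (a : α) :
    Function.Bijective fun p : Σ b : {b // b ≠ a}, PerfectMatching {x // x ≠ a ∧ x ≠ b.1} =>
      extendMatching p.1.2 p.2 := by
  refine ⟨?_, fun f => ?_⟩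
  · rintro ⟨⟨b, hb⟩, g⟩ ⟨⟨b', hb'⟩, g'⟩ hgg'
    have hfg : extendPerm a b g.1 = extendPerm a b' g'.1 := congrArg Subtype.val hgg'
    obtain rfl : b = b' := by
      simpa [extendPerm_apply_left] using congrArg (· a) hfg
    obtain rfl : g = g' := Subtype.ext <| Equiv.ext fun x => Subtype.ext <| by
      have := congrArg (· x.1) hfg
      rwa [extendPerm_apply_of_ne _ x.2, extendPerm_apply_of_ne _ x.2] at this
    rfl
  · have hfa := (f.2 a).1
    have hmem : ∀ x, x ≠ a ∧ x ≠ f.1 a ↔ f.1 x ≠ a ∧ f.1 x ≠ f.1 a := fun x =>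
      ⟨fun ⟨h1, h2⟩ => ⟨fun h => h2 (by rw [← h, (f.2 x).1]), fun h => h1 (f.1.injective h)⟩,
        fun ⟨h1, h2⟩ => ⟨fun h => h2 (by rw [h]), fun h => h1 (by rw [h, hfa])⟩⟩
    refine ⟨⟨⟨f.1 a, (f.2 a).2⟩, ⟨f.1.subtypePerm fun x => (hmem x).symm, fun y =>
      ⟨Subtype.ext (f.2 y).1, fun h => (f.2 y).2 (congrArg Subtype.val h)⟩⟩⟩, ?_⟩
    refine Subtype.ext (Equiv.ext fun x => ?_)
    by_cases hxa : x = a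
    · subst hxa; exact extendPerm_apply_left _
    by_cases hxb : x = f.1 a
    · subst hxb; exact (extendPerm_apply_right _).trans hfa.symm
    exact extendPerm_apply_of_ne _ ⟨hxa, hxb⟩

theorem card_perfectMatching [Fintype α] (h : Even (Fintype.card α)) :
    Nat.card (PerfectMatching α) = (Fintype.card α - 1)‼ := by
  obtain ⟨n, hcard⟩ : ∃ n, Fintype.card α = n := ⟨_, rfl⟩
  rw [hcard] at h ⊢
  induction n using Nat.strong_induction_on generalizing α with
  | _ n ih =>
  rcases Nat.eq_zero_or_pos n with rfl | hpos
  · have := Fintype.card_eq_zero_iff.mp hcard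
    have : Nonempty (PerfectMatching α) := ⟨⟨1, isEmptyElim⟩⟩
    have : Subsingleton (PerfectMatching α) := ⟨fun _ _ => Subtype.ext (Equiv.ext isEmptyElim)⟩
    exact Nat.card_unique
  obtain ⟨m, rfl⟩ : ∃ m, n = m + 2 := ⟨n - 2, by obtain ⟨t, rfl⟩ := h; omega⟩
  obtain ⟨a⟩ : Nonempty α := Fintype.card_pos_iff.mp (hcard ▸ hpos)
  have hfib : ∀ b : {b // b ≠ a},
      Nat.card (PerfectMatching {x // x ≠ a ∧ x ≠ b.1}) = (m - 1)‼ := fun b =>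
    ih m (by omega) (by simpa [parity_simps] using h)
      (by rw [card_subtype_ne_and_ne b.2, hcard]; rfl)
  rw [← Nat.card_eq_of_bijective _ (extendMatching_bijective a), Nat.card_sigma,
    sum_congr rfl fun b _ => hfib b, sum_const, card_univ, card_subtype_ne, hcard, smul_eq_mul]
  rcases m with _ | m
  · rfl
  · simp

end MatchingCount

section Patterns

open scoped Nat

variable {X Y V : Type*} (H : V → V → ℕ)

abbrev Edges : Type _ := {w : V × V // H w.1 w.2 = 1}

lemma card_edges_fst [Fintype V] (hle : ∀ u v, H u v ≤ 1) (u : V) :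
    Nat.card {e : Edges H // e.1.1 = u} = ∑ v, H u v := by
  rw [← card_subtype_eq_one (H u) (hle u)]
  exact Nat.card_congr
    { toFun e := ⟨e.1.1.2, by obtain ⟨⟨_, h⟩, rfl⟩ := e; exact h⟩
      invFun v := ⟨⟨(u, v.1), v.2⟩, rfl⟩
      left_inv := by rintro ⟨⟨⟨u', v⟩, h⟩, rfl⟩; rfl
      right_inv v := rfl }

lemma card_edges_snd [Fintype V] (hle : ∀ u v, H u v ≤ 1) (v : V) :
    Nat.card {e : Edges H // e.1.2 = v} = ∑ u, H u v := by
  rw [← card_subtype_eq_one (H · v) (hle · v)]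
  exact Nat.card_congr
    { toFun e := ⟨e.1.1.1, by obtain ⟨⟨_, h⟩, rfl⟩ := e; exact h⟩
      invFun u := ⟨⟨(u.1, v), u.2⟩, rfl⟩
      left_inv := by rintro ⟨⟨⟨u, v'⟩, h⟩, rfl⟩; rfl
      right_inv u := rfl }

def edgesSwap (hsymm : ∀ u v, H u v = H v u) : Edges H ≃ Edges H :=
  (Equiv.prodComm V V).subtypeEquiv fun w => by simp [hsymm w.1]

@[simp]
lemma coe_edgesSwap (hsymm : ∀ u v, H u v = H v u) (e : Edges H) :
    (edgesSwap H hsymm e : V × V) = (e : V × V).swap := rfl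

@[simp]
lemma edgesSwap_edgesSwap (hsymm : ∀ u v, H u v = H v u) (e : Edges H) :
    edgesSwap H hsymm (edgesSwap H hsymm e) = e := rfl

lemma pattern_iff (p r : X → V) :
    (∀ i j, Nat.card {x // p x = i ∧ r x = j} = H i j) ↔
      ∀ w : V × V, Nat.card {x // (p x, r x) = w} = H w.1 w.2 := by
  simp only [Prod.forall, card_fiber_prodMk]

variable (p : X → V)

lemma apply_symm_fst_eq {α : X ≃ Edges H} (hα : ∀ x, (α x).1.1 = p x) (e : Edges H) :
    p (α.symm e) = e.1.1 := by
  rw [← hα, Equiv.apply_symm_apply]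

def matchingOfEdgeEquiv (hsymm : ∀ u v, H u v = H v u) (hloop : ∀ u, H u u = 0)
    (α : X ≃ Edges H) : PerfectMatching X :=
  ⟨α.trans ((edgesSwap H hsymm).trans α.symm), fun x => ⟨by simp, fun hx => by
    have hfix : edgesSwap H hsymm (α x) = α x := by simpa using congrArg α hx
    have hdiag : (α x).1.2 = (α x).1.1 := congrArg (fun e => e.1.1) hfix
    have := (α x).2
    rw [hdiag, hloop] at this
    exact zero_ne_one this⟩⟩

lemma matchingOfEdgeEquiv_pattern (hsymm : ∀ u v, H u v = H v u) (hloop : ∀ u, H u u = 0)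
    {α : X ≃ Edges H} (hα : ∀ x, (α x).1.1 = p x) (x : X) :
    (p x, p ((matchingOfEdgeEquiv H hsymm hloop α).1 x)) = (α x).1 := by
  simp only [matchingOfEdgeEquiv, Equiv.trans_apply, apply_symm_fst_eq H p hα,
    coe_edgesSwap, Prod.fst_swap, ← hα]

variable [Finite X]

/-- With `α x := (p x, p (σ x))`, a bijection onto the edges of `H`, one recovers
`σ = α⁻¹ ∘ swap ∘ α`. -/
noncomputable def perfectMatchingPatternEquiv (hsymm : ∀ u v, H u v = H v u)
    (hle : ∀ u v, H u v ≤ 1) (hloop : ∀ u, H u u = 0) :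
    {σ : PerfectMatching X // ∀ i j, Nat.card {x // p x = i ∧ p (σ.1 x) = j} = H i j} ≃
      {α : X ≃ Edges H // ∀ x, (α x).1.1 = p x} where
  toFun σ := ⟨equivOfCardFiber (fun x => (p x, p (σ.1.1 x))) (fun w => H w.1 w.2)
    (fun _ => hle _ _) ((pattern_iff H p _).mp σ.2), fun _ => rfl⟩
  invFun α := ⟨matchingOfEdgeEquiv H hsymm hloop α, (pattern_iff H p _).mpr <|
    card_fiber_of_equiv _ _ (fun _ => hle _ _) α.1 fun x =>
      (matchingOfEdgeEquiv_pattern H p hsymm hloop α.2 x).symm⟩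
  left_inv σ := by
    refine Subtype.ext (Subtype.ext (Equiv.ext fun x => ?_))
    simp only [matchingOfEdgeEquiv, Equiv.trans_apply, Equiv.symm_apply_eq]
    exact Subtype.ext (Prod.ext rfl (by simp [(σ.1.2 x).1]))
  right_inv α := Subtype.ext (Equiv.ext fun x => Subtype.ext
    (matchingOfEdgeEquiv_pattern H p hsymm hloop α.2 x))

end Patterns

section EquivPatterns

variable {X Y V : Type*} (H : V → V → ℕ) [Finite X] (p : X → V) (q : Y → V)

/-- `f` factors as `X ≃ Edges H ≃ Y` through the bijection `x ↦ (p x, q (f x))`. -/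
noncomputable def equivPatternEquiv (hle : ∀ u v, H u v ≤ 1) :
    {f : X ≃ Y // ∀ i j, Nat.card {x // p x = i ∧ q (f x) = j} = H i j} ≃
      {α : X ≃ Edges H // ∀ x, (α x).1.1 = p x} ×
        {β : Edges H ≃ Y // ∀ e, q (β e) = e.1.2} where
  toFun f :=
    let α := equivOfCardFiber (fun x => (p x, q (f.1 x))) (fun w => H w.1 w.2)
      (fun _ => hle _ _) ((pattern_iff H p _).mp f.2)
    (⟨α, fun _ => rfl⟩, ⟨α.symm.trans f.1, fun e =>
      congrArg (fun e : Edges H => e.1.2) (α.apply_symm_apply e)⟩)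
  invFun αβ := ⟨αβ.1.1.trans αβ.2.1, (pattern_iff H p _).mpr <|
    card_fiber_of_equiv _ _ (fun _ => hle _ _) αβ.1.1 fun x =>
      Prod.ext (αβ.1.2 x) (αβ.2.2 _).symm⟩
  left_inv f := Subtype.ext (Equiv.ext fun x => by simp)
  right_inv αβ := by
    obtain ⟨⟨α, hα⟩, ⟨β, hβ⟩⟩ := αβ
    have hcoe : ∀ x, (α x : V × V) = (p x, q ((α.trans β) x)) :=
      fun x => Prod.ext (hα x) (hβ _).symm
    refine Prod.ext (Subtype.ext ?_) (Subtype.ext ?_) <;>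
      simp only [equivOfCardFiber_eq _ _ _ _ α hcoe, ← Equiv.trans_assoc, Equiv.symm_trans_self,
        Equiv.refl_trans]

end EquivPatterns

section PatternCounts

open scoped Nat

variable {X Y V : Type*} [Fintype V] [Finite X] [Finite Y] (H : V → V → ℕ) (p : X → V)
  (q : Y → V)

theorem card_perfectMatching_pattern (hsymm : ∀ u v, H u v = H v u) (hle : ∀ u v, H u v ≤ 1)
    (hloop : ∀ u, H u u = 0) (hdeg : ∀ u, Nat.card {x // p x = u} = ∑ v, H u v) :
    Nat.card {σ : PerfectMatching X // ∀ i j, Nat.card {x // p x = i ∧ p (σ.1 x) = j} = H i j} =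
      ∏ u, (Nat.card {x // p x = u})! := by
  rw [Nat.card_congr (perfectMatchingPatternEquiv H p hsymm hle hloop)]
  exact card_fiberwise_equiv p (fun e : Edges H => e.1.1) fun u => by
    rw [hdeg, card_edges_fst H hle]

theorem card_equiv_pattern (hle : ∀ u v, H u v ≤ 1)
    (hrow : ∀ u, Nat.card {x // p x = u} = ∑ v, H u v)
    (hcol : ∀ v, Nat.card {y // q y = v} = ∑ u, H u v) :
    Nat.card {f : X ≃ Y // ∀ i j, Nat.card {x // p x = i ∧ q (f x) = j} = H i j} =
      (∏ u, (Nat.card {x // p x = u})!) * ∏ v, (Nat.card {y // q y = v})! := by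
  rw [Nat.card_congr (equivPatternEquiv H p q hle), Nat.card_prod,
    card_fiberwise_equiv p (fun e : Edges H => e.1.1) fun u => by rw [hrow, card_edges_fst H hle],
    card_fiberwise_equiv (fun e : Edges H => e.1.2) q fun v => by rw [hcol, card_edges_snd H hle]]
  simp only [card_edges_snd H hle, hcol]

end PatternCounts

section ColorSplit

variable {ι M : Type*} [LinearOrder ι] [Fintype ι] [CommMonoid M]

@[to_additive]
lemma prod_eq_prod_diag_mul_prod_lt (f : ι × ι → M) :
    ∏ c, f c =
      (∏ i, f (i, i)) * ∏ c ∈ univ.filter (fun c : ι × ι => c.1 < c.2), f c * f c.swap := by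
  rw [prod_mul_distrib, ← prod_filter_mul_prod_filter_not univ (fun c : ι × ι => c.1 = c.2),
    ← univ_product_univ, ← diag_eq_filter, prod_diag, univ_product_univ]
  congr 1
  have hgt : ∏ c ∈ univ.filter (fun c : ι × ι => c.1 < c.2), f c.swap =
      ∏ c ∈ univ.filter (fun c : ι × ι => c.2 < c.1), f c :=
    prod_equiv (Equiv.prodComm ι ι) (by simp) (by simp)
  rw [hgt, ← prod_union (disjoint_filter.mpr fun c _ h => (lt_asymm h))]
  exact prod_congr (by ext c; simp [lt_or_lt_iff_ne]) fun _ _ => rfl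

end ColorSplit

section Configurations

open scoped Nat

variable {L n : ℕ} (D : Fin n → Fin L × Fin L → ℕ)

lemma card_CW (c : Fin L × Fin L) : Nat.card (CW L n D c) = ∑ u, D u c := by
  simp [CW]

lemma card_CW_fiber (c : Fin L × Fin L) (u : Fin n) :
    Nat.card {x : CW L n D c // x.1 = u} = D u c := by
  rw [Nat.card_congr (Equiv.sigmaSubtype u), Nat.card_eq_fintype_card, Fintype.card_fin]

def configEquiv : Config L n D ≃
    (∀ k, PerfectMatching (CW L n D (k, k))) ×
      (∀ c : Fin L × Fin L, c.1 < c.2 → (CW L n D c ≃ CW L n D c.swap)) where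
  toFun σ := (fun k => ⟨σ.1.1 k, σ.2 k⟩, σ.1.2)
  invFun τ := ⟨(fun k => (τ.1 k).1, τ.2), fun k => (τ.1 k).2⟩
  left_inv _ := rfl
  right_inv _ := rfl

theorem card_config (hadm1 : ∀ c : Fin L × Fin L, ∑ u, D u c = ∑ u, D u c.swap)
    (hadm2 : ∀ k : Fin L, Even (∑ u, D u (k, k))) :
    Nat.card (Config L n D) =
      (∏ c ∈ univ.filter (fun c : Fin L × Fin L => c.1 < c.2), (∑ u, D u c)!) *
        ∏ k : Fin L, (∑ u, D u (k, k) - 1)‼ := by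
  classical
  rw [Nat.card_congr (configEquiv D), Nat.card_prod, Nat.card_pi, Nat.card_pi, mul_comm]
  congr 1
  · simp only [card_prop_arrow, ← prod_filter]
    exact prod_congr rfl fun c _ => by
      rw [card_equiv_of_card_eq (by rw [card_CW, card_CW, hadm1]), card_CW]
  · refine prod_congr rfl fun k _ => ?_
    have hS : Fintype.card (CW L n D (k, k)) = ∑ u, D u (k, k) := by
      rw [← Nat.card_eq_fintype_card, card_CW]
    rw [card_perfectMatching (hS ▸ hadm2 k), hS]

end Configurations

section Gamma

variable {L n : ℕ} {D : Fin n → Fin L × Fin L → ℕ} (σ : Config L n D)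

lemma gamma_diag (k : Fin L) (i j : Fin n) :
    Gamma L n D σ (k, k) i j = Nat.card {x : CW L n D (k, k) // x.1 = i ∧ (σ.1.1 k x).1 = j} := by
  rw [Gamma, dif_pos rfl]

lemma gamma_of_lt {c : Fin L × Fin L} (hlt : c.1 < c.2) (i j : Fin n) :
    Gamma L n D σ c i j = Nat.card {x : CW L n D c // x.1 = i ∧ (σ.1.2 c hlt x).1 = j} := by
  rw [Gamma, dif_neg hlt.ne, dif_pos hlt]

lemma gamma_of_gt {c : Fin L × Fin L} (hgt : c.2 < c.1) (i j : Fin n) :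
    Gamma L n D σ c i j = Gamma L n D σ c.swap j i := by
  rw [Gamma, dif_neg hgt.ne', dif_neg hgt.not_gt, gamma_of_lt σ hgt]

lemma card_subtype_and_involutive_comm {X V : Type*} {g : X → X} (hg : Function.Involutive g)
    (p : X → V) (i j : V) :
    Nat.card {x // p x = i ∧ p (g x) = j} = Nat.card {x // p x = j ∧ p (g x) = i} :=
  Nat.card_congr <| (hg.toPerm g).subtypeEquiv fun x => by simp [hg x, and_comm]

lemma even_card_subtype_and_eq {X V : Type*} [Finite X] {g : X → X}
    (hg : Function.Involutive g) (hfix : ∀ x, g x ≠ x) (p : X → V) (i : V) :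
    Even (Nat.card {x // p x = i ∧ p (g x) = i}) := by
  classical
  have := Fintype.ofFinite X
  rw [Nat.card_eq_fintype_card]
  refine even_card_of_involutive (g := fun x => ⟨g x.1, x.2.2, by rw [hg]; exact x.2.1⟩)
    (fun x => Subtype.ext (hg x.1)) fun x h => hfix x.1 (congrArg Subtype.val h)

theorem gamma_isMultigraph : IsMultigraph L n D (Gamma L n D σ) := by
  have hinv : ∀ k, Function.Involutive (σ.1.1 k) := fun k x => (σ.2 k x).1
  refine ⟨fun k i j => ?_, fun k i => ?_, fun c hne i j => ?_, fun i c => ?_⟩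
  · rw [gamma_diag, gamma_diag, card_subtype_and_involutive_comm (hinv k)]
  · rw [gamma_diag]
    exact even_card_subtype_and_eq (hinv k) (fun x => (σ.2 k x).2) _ i
  · rcases lt_or_gt_of_ne hne with hlt | hgt
    · exact (gamma_of_gt σ (c := c.swap) hlt j i).symm
    · exact gamma_of_gt σ hgt i j
  · rcases lt_trichotomy c.1 c.2 with hlt | heq | hgt
    · simp only [gamma_of_lt σ hlt, sum_card_subtype_and_eq, card_CW_fiber]
    · obtain ⟨k, _⟩ := c
      obtain rfl : k = _ := heq
      simp only [gamma_diag, sum_card_subtype_and_eq, card_CW_fiber]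
    · simp only [gamma_of_gt σ hgt, gamma_of_lt σ (c := c.swap) hgt, sum_card_subtype_eq_and]
      rw [Nat.card_congr ((σ.1.2 c.swap hgt).subtypeEquiv (q := (·.1 = i)) fun _ => Iff.rfl),
        card_CW_fiber, Prod.swap_swap]

end Gamma

section ShortCycles

variable {L n : ℕ} {D : Fin n → Fin L × Fin L → ℕ} {H : Fin L × Fin L → Fin n → Fin n → ℕ}

lemma even_colorBlind_self (hmg : IsMultigraph L n D H) (v : Fin n) :
    Even (colorBlind L n H v v) := by
  rw [colorBlind, sum_eq_sum_diag_add_sum_lt]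
  refine (even_sum _ fun k _ => hmg.2.1 k v).add (even_sum _ fun c hc => ?_)
  rw [hmg.2.2.1 c (mem_filter.mp hc).2.ne v v]
  exact Even.add_self _

lemma le_colorBlind (c : Fin L × Fin L) (u v : Fin n) : H c u v ≤ colorBlind L n H u v :=
  single_le_sum (f := (H · u v)) (fun _ _ => Nat.zero_le _) (mem_univ c)

theorem isSimple_of_noShortCycle (hmg : IsMultigraph L n D H) {h : ℕ} (hh : 2 ≤ h)
    (hnsc : NoShortCycle n (colorBlind L n H) h) :
    (∀ c u v, H c u v ≤ 1) ∧ ∀ c u, H c u u = 0 := by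
  have hloop : ∀ v, colorBlind L n H v v = 0 := fun v => by
    have : colorBlind L n H v v < 2 := not_le.mp fun hv =>
      hnsc 1 le_rfl (by omega) (by simp only [HasCycleLen, if_pos]; exact ⟨v, hv⟩)
    obtain ⟨t, ht⟩ := even_colorBlind_self hmg v
    omega
  have hmult : ∀ u v, u ≠ v → colorBlind L n H u v ≤ 1 := fun u v huv => not_lt.mp fun huv' =>
    hnsc 2 one_le_two hh (by simp only [HasCycleLen]; exact ⟨u, v, huv, huv'⟩)
  have hzero : ∀ c u, H c u u = 0 := fun c u => by
    have := le_colorBlind (H := H) c u u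
    rw [hloop] at this
    omega
  refine ⟨fun c u v => ?_, hzero⟩
  rcases eq_or_ne u v with rfl | huv
  · rw [hzero]; exact zero_le_one
  · exact (le_colorBlind c u v).trans (hmult u v huv)

end ShortCycles

section GammaFibers

open scoped Nat

variable {L n : ℕ} {D : Fin n → Fin L × Fin L → ℕ} (H : Fin L × Fin L → Fin n → Fin n → ℕ)

lemma gamma_eq_of_counts (hmg : IsMultigraph L n D H) (σ : Config L n D)
    (hdiag : ∀ k i j, Nat.card {x : CW L n D (k, k) // x.1 = i ∧ (σ.1.1 k x).1 = j} = H (k, k) i j)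
    (hlt : ∀ c (hc : c.1 < c.2) i j,
      Nat.card {x : CW L n D c // x.1 = i ∧ (σ.1.2 c hc x).1 = j} = H c i j) :
    Gamma L n D σ = H := by
  funext c i j
  rcases lt_trichotomy c.1 c.2 with hc | hc | hc
  · rw [gamma_of_lt σ hc, hlt]
  · obtain ⟨k, _⟩ := c
    obtain rfl : k = _ := hc
    rw [gamma_diag, hdiag]
  · rw [gamma_of_gt σ hc, gamma_of_lt σ (c := c.swap) hc, hlt, ← hmg.2.2.1 c hc.ne']

def gammaFiberEquiv (hmg : IsMultigraph L n D H) :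
    {σ : Config L n D // Gamma L n D σ = H} ≃
      (∀ k, {m : PerfectMatching (CW L n D (k, k)) //
          ∀ i j, Nat.card {x : CW L n D (k, k) // x.1 = i ∧ (m.1 x).1 = j} = H (k, k) i j}) ×
        (∀ c : Fin L × Fin L, c.1 < c.2 → {f : CW L n D c ≃ CW L n D c.swap //
          ∀ i j, Nat.card {x : CW L n D c // x.1 = i ∧ (f x).1 = j} = H c i j}) where
  toFun σ :=
    (fun k => ⟨⟨σ.1.1.1 k, σ.1.2 k⟩, fun i j => by rw [← gamma_diag, σ.2]⟩,
      fun c hc => ⟨σ.1.1.2 c hc, fun i j => by rw [← gamma_of_lt, σ.2]⟩)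
  invFun τ := ⟨⟨(fun k => (τ.1 k).1.1, fun c hc => (τ.2 c hc).1), fun k => (τ.1 k).1.2⟩,
    gamma_eq_of_counts H hmg _ (fun k => (τ.1 k).2) fun c hc => (τ.2 c hc).2⟩
  left_inv _ := rfl
  right_inv _ := rfl

theorem card_gamma_fiber (hmg : IsMultigraph L n D H) (hle : ∀ c u v, H c u v ≤ 1)
    (hloop : ∀ c u, H c u u = 0) :
    Nat.card {σ : Config L n D // Gamma L n D σ = H} = ∏ c, ∏ u, (D u c)! := by
  classical
  rw [Nat.card_congr (gammaFiberEquiv H hmg), Nat.card_prod, Nat.card_pi, Nat.card_pi,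
    prod_eq_prod_diag_mul_prod_lt (fun c => ∏ u, (D u c)!)]
  simp only [card_prop_arrow, ← prod_filter]
  congr 1
  · refine prod_congr rfl fun k _ => ?_
    rw [card_perfectMatching_pattern _ _ (hmg.1 k) (hle _) (hloop _) fun u => by
      rw [card_CW_fiber, hmg.2.2.2]]
    simp only [card_CW_fiber]
  · refine prod_congr rfl fun c hc => ?_
    have hne := (mem_filter.mp hc).2.ne
    rw [card_equiv_pattern _ _ _ (hle c) (fun u => by rw [card_CW_fiber, hmg.2.2.2])
      fun v => by
        rw [card_CW_fiber, hmg.2.2.2]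
        exact sum_congr rfl fun u _ => (hmg.2.2.1 c hne u v).symm]
    simp only [card_CW_fiber]

end GammaFibers

open scoped Nat in
theorem card_noShortCycle_multigraph_mul {L n : ℕ} (D : Fin n → Fin L × Fin L → ℕ) {h : ℕ}
    (hh : 2 ≤ h) :
    Nat.card {H : Fin L × Fin L → Fin n → Fin n → ℕ //
        IsMultigraph L n D H ∧ NoShortCycle n (colorBlind L n H) h} * ∏ c, ∏ u, (D u c)! =
      Nat.card {σ : Config L n D // NoShortCycle n (colorBlind L n (Gamma L n D σ)) h} := by
  symm
  refine card_eq_mul_of_card_fiber (fun σ => ⟨Gamma L n D σ.1, gamma_isMultigraph σ.1, σ.2⟩)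
    (by positivity) fun H => ?_
  obtain ⟨hle, hloop⟩ := isSimple_of_noShortCycle H.2.1 hh H.2.2
  rw [← card_gamma_fiber H.1 H.2.1 hle hloop]
  exact Nat.card_congr
    { toFun σ := ⟨σ.1.1, congrArg Subtype.val σ.2⟩
      invFun σ := ⟨⟨σ.1, by rw [σ.2]; exact H.2.2⟩, Subtype.ext σ.2⟩
      left_inv _ := rfl
      right_inv _ := rfl }

open Filter

theorem stmt_5_general (L : ℕ)
    (D : ∀ n : ℕ, Fin n → Fin L × Fin L → ℕ)
    (hadm1 : ∀ n, ∀ c : Fin L × Fin L, ∑ u, D n u c = ∑ u, D n u c.swap)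
    (hadm2 : ∀ n, ∀ k : Fin L, Even (∑ u, D n u (k, k)))
    (h : ℕ) (hh : 2 ≤ h) (α : ℝ)
    (hlim : Tendsto (fun n : ℕ =>
        (Nat.card {σ : Config L n (D n) //
            NoShortCycle n (colorBlind L n (Gamma L n (D n) σ)) h} : ℝ) /
          (Nat.card (Config L n (D n)) : ℝ))
      atTop (nhds α)) :
    Tendsto (fun n : ℕ =>
        (Nat.card {H : Fin L × Fin L → Fin n → Fin n → ℕ //
            IsMultigraph L n (D n) H ∧ NoShortCycle n (colorBlind L n H) h} : ℝ) *
          (∏ c : Fin L × Fin L, ∏ u, (Nat.factorial (D n u c) : ℝ)) /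
          ((∏ c ∈ Finset.univ.filter (fun c : Fin L × Fin L => c.1 < c.2),
              (Nat.factorial (∑ u, D n u c) : ℝ)) *
            ∏ k : Fin L, (Nat.doubleFactorial (∑ u, D n u (k, k) - 1) : ℝ)))
      atTop (nhds α) := by
  refine hlim.congr fun n => ?_
  rw [← card_noShortCycle_multigraph_mul (D n) hh, card_config (D n) (hadm1 n) (hadm2 n)]
  push_cast
  rfl

/-- Under the hypotheses of Statement 4 (entries of `D⁽ⁿ⁾` bounded by
`θ` and empirical measures converging weakly to `P`), for `h ≥ 2`, if the probability
that the configuration model on `D⁽ⁿ⁾` produces no cycle of length `≤ h` converges to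
`α_h > 0`, then
`|G(D⁽ⁿ⁾,h)| ~ α_h · (∏_{c∈C_<} S_c⁽ⁿ⁾! ∏_{c∈C_=} (S_c⁽ⁿ⁾−1)!!) / ∏_c ∏_u D_c⁽ⁿ⁾(u)!`,
i.e. the ratio converges to `α_h`. -/
theorem stmt_5 (θ L : ℕ) (hL : 1 ≤ L)
    (P : ((Fin L × Fin L) → Fin (θ + 1)) → ℝ)
    (hP0 : ∀ M, 0 ≤ P M)
    (hP1 : ∑ M : (Fin L × Fin L) → Fin (θ + 1), P M = 1)
    (D : ∀ n : ℕ, Fin n → Fin L × Fin L → ℕ)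
    (hbound : ∀ n u c, D n u c ≤ θ)
    (hadm1 : ∀ n, ∀ c : Fin L × Fin L, ∑ u, D n u c = ∑ u, D n u c.swap)
    (hadm2 : ∀ n, ∀ k : Fin L, Even (∑ u, D n u (k, k)))
    (hconv : ∀ M : (Fin L × Fin L) → Fin (θ + 1),
      Tendsto (fun n : ℕ =>
          (Nat.card {u : Fin n // ∀ c, D n u c = (M c : ℕ)} : ℝ) / n)
        atTop (nhds (P M)))
    (h : ℕ) (hh : 2 ≤ h) (α : ℝ) (hα : 0 < α)
    (hlim : Tendsto (fun n : ℕ =>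
        (Nat.card {σ : Config L n (D n) //
            NoShortCycle n (colorBlind L n (Gamma L n (D n) σ)) h} : ℝ) /
          (Nat.card (Config L n (D n)) : ℝ))
      atTop (nhds α)) :
    Tendsto (fun n : ℕ =>
        (Nat.card {H : Fin L × Fin L → Fin n → Fin n → ℕ //
            IsMultigraph L n (D n) H ∧ NoShortCycle n (colorBlind L n H) h} : ℝ) *
          (∏ c : Fin L × Fin L, ∏ u, (Nat.factorial (D n u c) : ℝ)) /
          ((∏ c ∈ Finset.univ.filter (fun c : Fin L × Fin L => c.1 < c.2),
              (Nat.factorial (∑ u, D n u c) : ℝ)) *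
            ∏ k : Fin L, (Nat.doubleFactorial (∑ u, D n u (k, k) - 1) : ℝ)))
      atTop (nhds α) :=
  stmt_5_general L D hadm1 hadm2 h hh α hlim
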